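/- arXiv:2002.11199 — 2 statements merged into one kernel-verified Lean document; each statement's English description precedes it below -/
import Mathlib

section
/- Let (X,f) be a dynamical system on a compact metric space with f an expansive surjection. Then the following are equivalent: (1) f has shadowing; (2) f has two-sided shadowing; (3) f has s-limit shadowing; (4) f has two-sided s-limit shadowing. -/
open Filter Topology Function

variable {X : Type*} [MetricSpace X]

/-- A (forward) `δ`-pseudo-orbit. -/
def PseudoOrbit (f : X → X) (δ : ℝ) (x : ℕ → X) : Prop :=
  ∀ i, dist (f (x i)) (x (i + 1)) < δ

/-- The orbit of `z` `ε`-shadows the sequence `x`. -/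
def ShadowsFrom (f : X → X) (ε : ℝ) (z : X) (x : ℕ → X) : Prop :=
  ∀ i, dist (f^[i] z) (x i) < ε

/-- Classical shadowing. -/
def HasShadowing (f : X → X) : Prop :=
  ∀ ε > 0, ∃ δ > 0, ∀ x : ℕ → X, PseudoOrbit f δ x → ∃ z, ShadowsFrom f ε z x

/-- A full (two-sided) orbit. -/
def FullOrbit (f : X → X) (z : ℤ → X) : Prop := ∀ i : ℤ, f (z i) = z (i + 1)

/-- A two-sided `δ`-pseudo-orbit. -/
def TwoSidedPseudoOrbit (f : X → X) (δ : ℝ) (x : ℤ → X) : Prop :=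
  ∀ i : ℤ, dist (f (x i)) (x (i + 1)) < δ

/-- Two-sided shadowing. -/
def HasTwoSidedShadowing (f : X → X) : Prop :=
  ∀ ε > 0, ∃ δ > 0, ∀ x : ℤ → X, TwoSidedPseudoOrbit f δ x →
    ∃ z : ℤ → X, FullOrbit f z ∧ ∀ i, dist (z i) (x i) < ε

/-- A backwards `δ`-pseudo-orbit (indexed by nonpositive integers). -/
def BackwardPseudoOrbit (f : X → X) (δ : ℝ) (x : ℤ → X) : Prop :=
  ∀ i < (0 : ℤ), dist (f (x i)) (x (i + 1)) < δ

/-- A backwards orbit. -/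
def BackwardOrbit (f : X → X) (z : ℤ → X) : Prop := ∀ i < (0 : ℤ), f (z i) = z (i + 1)

/-- Backwards shadowing. -/
def HasBackwardShadowing (f : X → X) : Prop :=
  ∀ ε > 0, ∃ δ > 0, ∀ x : ℤ → X, BackwardPseudoOrbit f δ x →
    ∃ z : ℤ → X, BackwardOrbit f z ∧ ∀ i ≤ (0 : ℤ), dist (z i) (x i) < ε

/-- An asymptotic pseudo-orbit. -/
def AsymptoticPseudoOrbit (f : X → X) (x : ℕ → X) : Prop :=
  Tendsto (fun i => dist (f (x i)) (x (i + 1))) atTop (nhds 0)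

/-- s-limit shadowing. -/
def HasSLimitShadowing (f : X → X) : Prop :=
  HasShadowing f ∧ ∀ ε > 0, ∃ δ > 0, ∀ x : ℕ → X,
    PseudoOrbit f δ x → AsymptoticPseudoOrbit f x →
    ∃ z, ShadowsFrom f ε z x ∧ Tendsto (fun i => dist (f^[i] z) (x i)) atTop (nhds 0)

/-- Two-sided asymptotic pseudo-orbit condition. -/
def TwoSidedAsymptotic (f : X → X) (x : ℤ → X) : Prop :=
  Tendsto (fun i => dist (f (x i)) (x (i + 1))) atTop (nhds 0) ∧
  Tendsto (fun i => dist (f (x i)) (x (i + 1))) atBot (nhds 0)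

/-- The L-shadowing condition: two-sided asymptotic pseudo-orbits are
asymptotically shadowed by full orbits. -/
def HasLShadowing (f : X → X) : Prop :=
  ∀ ε > 0, ∃ δ > 0, ∀ x : ℤ → X,
    TwoSidedPseudoOrbit f δ x → TwoSidedAsymptotic f x →
    ∃ z : ℤ → X, FullOrbit f z ∧ (∀ i, dist (z i) (x i) < ε) ∧
      Tendsto (fun i => dist (z i) (x i)) atTop (nhds 0) ∧
      Tendsto (fun i => dist (z i) (x i)) atBot (nhds 0)

/-- Two-sided s-limit shadowing. -/
def HasTwoSidedSLimitShadowing (f : X → X) : Prop :=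
  HasTwoSidedShadowing f ∧ HasLShadowing f

/-- Backwards asymptotic pseudo-orbit condition. -/
def BackwardAsymptotic (f : X → X) (x : ℤ → X) : Prop :=
  Tendsto (fun i => dist (f (x i)) (x (i + 1))) atBot (nhds 0)

/-- Backwards s-limit shadowing. -/
def HasBackwardSLimitShadowing (f : X → X) : Prop :=
  HasBackwardShadowing f ∧ ∀ ε > 0, ∃ δ > 0, ∀ x : ℤ → X,
    BackwardPseudoOrbit f δ x → BackwardAsymptotic f x →
    ∃ z : ℤ → X, BackwardOrbit f z ∧ (∀ i ≤ (0 : ℤ), dist (z i) (x i) < ε) ∧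
      Tendsto (fun i => dist (z i) (x i)) atBot (nhds 0)

/-- A set has at most `n` points. -/
def AtMostCard (S : Set X) (n : ℕ) : Prop := ∃ F : Finset X, F.card ≤ n ∧ S ⊆ ↑F

/-- Positively `n`-expansive. -/
def PosNExpansive (f : X → X) (n : ℕ) : Prop :=
  ∃ r > 0, ∀ x : X, AtMostCard {y | ∀ k : ℕ, dist (f^[k] x) (f^[k] y) < r} n

/-- `n`-expansive (two-sided). -/
def NExpansive (f : X → X) (n : ℕ) : Prop :=
  ∃ r > 0, ∀ x : ℤ → X, FullOrbit f x →
    AtMostCard {y0 | ∃ y : ℤ → X, FullOrbit f y ∧ y 0 = y0 ∧ ∀ i, dist (x i) (y i) < r} n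

/-- `n`-shadowing. -/
def HasNShadowing (f : X → X) (n : ℕ) : Prop :=
  ∃ η > 0, ∀ ε, 0 < ε → ε < η → ∃ δ > 0, ∀ x : ℕ → X, PseudoOrbit f δ x →
    (∃ z, ShadowsFrom f ε z x) ∧ AtMostCard {z | ShadowsFrom f ε z x} n

/-- Two-sided `n`-shadowing. -/
def HasTwoSidedNShadowing (f : X → X) (n : ℕ) : Prop :=
  ∃ η > 0, ∀ ε, 0 < ε → ε < η → ∃ δ > 0, ∀ x : ℤ → X, TwoSidedPseudoOrbit f δ x →
    (∃ z : ℤ → X, FullOrbit f z ∧ ∀ i, dist (z i) (x i) < ε) ∧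
    AtMostCard {z0 | ∃ z : ℤ → X, FullOrbit f z ∧ z 0 = z0 ∧ ∀ i, dist (z i) (x i) < ε} n

/-- h-shadowing. -/
def HasHShadowing (f : X → X) : Prop :=
  ∀ ε > 0, ∃ δ > 0, ∀ (m : ℕ) (x : ℕ → X),
    (∀ i < m, dist (f (x i)) (x (i + 1)) < δ) →
    ∃ z, (∀ i ≤ m, dist (f^[i] z) (x i) < ε) ∧ f^[m] z = x m

/-- Unique shadowing (`1`-shadowing). -/
def HasUniqueShadowing (f : X → X) : Prop :=
  ∃ η > 0, ∀ ε, 0 < ε → ε < η → ∃ δ > 0, ∀ x : ℕ → X, PseudoOrbit f δ x →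
    ∃! z, ShadowsFrom f ε z x

/-- Unique s-limit shadowing. -/
def HasUniqueSLimitShadowing (f : X → X) : Prop :=
  HasUniqueShadowing f ∧ ∃ η > 0, ∀ ε, 0 < ε → ε < η → ∃ δ > 0, ∀ x : ℕ → X,
    PseudoOrbit f δ x → AsymptoticPseudoOrbit f x →
    ∃! z, ShadowsFrom f ε z x ∧ Tendsto (fun i => dist (f^[i] z) (x i)) atTop (nhds 0)

/-- Unique h-shadowing. -/
def HasUniqueHShadowing (f : X → X) : Prop :=
  ∃ η > 0, ∀ ε, 0 < ε → ε < η → ∃ δ > 0, ∀ (m : ℕ) (x : ℕ → X),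
    (∀ i < m, dist (f (x i)) (x (i + 1)) < δ) →
    ∃! z, (∀ i ≤ m, dist (f^[i] z) (x i) < ε) ∧ f^[m] z = x m

/-- Limit shadowing. -/
def HasLimitShadowing (f : X → X) : Prop :=
  ∀ x : ℕ → X, AsymptoticPseudoOrbit f x →
    ∃ z, Tendsto (fun i => dist (f^[i] z) (x i)) atTop (nhds 0)

/-- Unique limit shadowing. -/
def HasUniqueLimitShadowing (f : X → X) : Prop :=
  ∀ x : ℕ → X, AsymptoticPseudoOrbit f x →
    ∃! z, Tendsto (fun i => dist (f^[i] z) (x i)) atTop (nhds 0)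

/-- c-expansivity. -/
def CExpansive (f : X → X) : Prop :=
  ∃ η > 0, ∀ x y : ℤ → X, FullOrbit f x → FullOrbit f y →
    (∀ i, dist (x i) (y i) < η) → x 0 = y 0

/-- Positive expansivity. -/
def PosExpansive (f : X → X) : Prop :=
  ∃ r > 0, ∀ x : X, {y | ∀ k : ℕ, dist (f^[k] x) (f^[k] y) < r} = {x}

/-- Topological mixing. -/
def Mixing (f : X → X) : Prop :=
  ∀ U V : Set X, IsOpen U → IsOpen V → U.Nonempty → V.Nonempty →
    ∃ N, ∀ n ≥ N, (f^[n] '' U ∩ V).Nonempty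

/-!
Shadowing passes to two-sided shadowing by a compactness argument: shadow the forward
pseudo-orbits `i ↦ x (i - n)` and take a cluster point of the resulting shifted orbits.
Conversely a forward pseudo-orbit becomes a two-sided one once it is continued backwards by
exact preimages, which surjectivity provides; the same extension turns two-sided asymptotic
shadowing into forward s-limit shadowing.

The asymptotic part comes from expansivity: if two sequences are asymptotic pseudo-orbits that
stay `ε`-close with `ε` below the expansivity constant, then every limit of their shifts is a
pair of `ε`-close full orbits, which therefore agree at time `0`; so the sequences themselves
are asymptotic.
-/

section ClusterPoints

variable {ι Y Z : Type*} [TopologicalSpace Y] [TopologicalSpace Z] {l : Filter ι} {w : ι → Y}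

theorem MapClusterPt.apply_eq_of_tendsto [T2Space Z] {p : Y} {g : Y → Z} {c : Z}
    (hp : MapClusterPt p l w) (hg : Continuous g) (h : Tendsto (g ∘ w) l (𝓝 c)) : g p = c :=
  eq_of_nhds_neBot ((hp.continuousAt_comp hg.continuousAt).clusterPt.mono h)

theorem tendsto_comp_of_forall_mapClusterPt [CompactSpace Y] {D : Y → Z} {c : Z}
    (hD : Continuous D) (h : ∀ p, MapClusterPt p l w → D p = c) :
    Tendsto (D ∘ w) l (𝓝 c) := by
  rw [tendsto_iff_ultrafilter]
  intro U hU
  obtain ⟨p, -, hp⟩ := isCompact_univ.ultrafilter_le_nhds (U.map w) (by simp)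
  have hcluster : MapClusterPt p l w := (ClusterPt.of_le_nhds hp).mono (map_mono hU)
  rw [← h p hcluster]
  exact (hD.tendsto p).comp hp

end ClusterPoints

variable {f : X → X}

def IsExpansivityConstant (f : X → X) (η : ℝ) : Prop :=
  ∀ x y : ℤ → X, FullOrbit f x → FullOrbit f y → (∀ i, dist (x i) (y i) < η) →
    x 0 = y 0

omit [MetricSpace X] in
theorem FullOrbit.iterate_apply {z : ℤ → X} (hz : FullOrbit f z) (n : ℕ) :
    f^[n] (z 0) = z n := by
  induction n with
  | zero => rfl
  | succ n ih => rw [Function.iterate_succ_apply', ih, hz, Nat.cast_succ]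

section Compact

variable [CompactSpace X]

theorem HasShadowing.hasTwoSidedShadowing (hf : Continuous f) (hS : HasShadowing f) :
    HasTwoSidedShadowing f := by
  intro ε hε
  obtain ⟨δ, hδ, hsh⟩ := hS (ε / 2) (half_pos hε)
  refine ⟨δ, hδ, fun x hx => ?_⟩
  have hshift : ∀ n : ℕ, PseudoOrbit f δ (fun i => x (i - n)) := fun n i => by
    simpa [sub_add_eq_add_sub] using hx (i - n)
  choose z hz using fun n => hsh _ (hshift n)
  obtain ⟨p, hp⟩ := exists_clusterPt_of_compactSpace
    (map (fun (n : ℕ) (j : ℤ) => f^[(j + n).toNat] (z n)) atTop)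
  have hlarge : ∀ j : ℤ, ∀ᶠ n : ℕ in atTop, 0 ≤ j + n := fun j =>
    eventually_atTop.2 ⟨(-j).toNat, fun n hn => by omega⟩
  refine ⟨p, fun j => ?_, fun j => ?_⟩
  · refine (isClosed_eq (f := fun q : ℤ → X => f (q j)) (g := fun q => q (j + 1)) (by fun_prop)
      (by fun_prop)).mem_of_mapClusterPt hp ((hlarge j).mono fun n hn => ?_)
    change f (f^[_] (z n)) = f^[_] (z n)
    rw [← Function.iterate_succ_apply' f]
    congr 2
    omega
  · refine ((isClosed_le (f := fun q : ℤ → X => dist (q j) (x j)) (by fun_prop)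
      continuous_const).mem_of_mapClusterPt hp
      ((hlarge j).mono fun n hn => ?_)).trans_lt (half_lt_self hε)
    have h := hz n (j + n).toNat
    simp only [Int.toNat_of_nonneg hn, add_sub_cancel_right] at h
    exact h.le

theorem IsExpansivityConstant.tendsto_dist_zero (hf : Continuous f) {η ε : ℝ}
    (hexp : IsExpansivityConstant f η) (hε : ε < η) {ι : Type*} {l : Filter ι}
    {u v : ι → ℤ → X}
    (hu : ∀ j, Tendsto (fun k => dist (f (u k j)) (u k (j + 1))) l (𝓝 0))
    (hv : ∀ j, Tendsto (fun k => dist (f (v k j)) (v k (j + 1))) l (𝓝 0))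
    (huv : ∀ j, ∀ᶠ k in l, dist (u k j) (v k j) ≤ ε) :
    Tendsto (fun k => dist (u k 0) (v k 0)) l (𝓝 0) := by
  refine tendsto_comp_of_forall_mapClusterPt (w := fun k => (u k, v k))
    (D := fun q => dist (q.1 0) (q.2 0)) (by fun_prop) fun p hp => ?_
  have hlimit_orbit (π : (ℤ → X) × (ℤ → X) → ℤ → X) (hπ : Continuous π)
      (h : ∀ j,
        Tendsto (fun k => dist (f (π (u k, v k) j)) (π (u k, v k) (j + 1))) l (𝓝 0)) :
      FullOrbit f (π p) := fun j =>
    dist_eq_zero.1 (hp.apply_eq_of_tendsto (g := fun q => dist (f (π q j)) (π q (j + 1)))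
      (by fun_prop) (h j))
  have hclose : ∀ i, dist (p.1 i) (p.2 i) < η := fun i =>
    ((isClosed_le (f := fun q : (ℤ → X) × (ℤ → X) => dist (q.1 i) (q.2 i)) (by fun_prop)
      continuous_const).mem_of_mapClusterPt hp (huv i)).trans_lt hε
  simp [hexp p.1 p.2 (hlimit_orbit _ continuous_fst hu) (hlimit_orbit _ continuous_snd hv) hclose]

theorem IsExpansivityConstant.tendsto_dist_of_fullOrbit (hf : Continuous f) {η ε : ℝ}
    (hexp : IsExpansivityConstant f η) (hε : ε < η) {l : Filter ℤ}
    (hl : ∀ j, Tendsto (· + j) l l) {x z : ℤ → X} (hz : FullOrbit f z)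
    (hzx : ∀ i, dist (z i) (x i) ≤ ε)
    (hx : Tendsto (fun i => dist (f (x i)) (x (i + 1))) l (𝓝 0)) :
    Tendsto (fun i => dist (z i) (x i)) l (𝓝 0) := by
  simpa using hexp.tendsto_dist_zero hf hε (u := fun k j => z (k + j)) (v := fun k j => x (k + j))
    (fun j => by simp_rw [← add_assoc, fun k => hz (k + j), dist_self]; exact tendsto_const_nhds)
    (fun j => by simpa [← add_assoc, Function.comp_def] using hx.comp (hl j))
    (fun j => .of_forall fun k => hzx _)

theorem HasShadowing.hasLShadowing (hf : Continuous f) (hexp : CExpansive f)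
    (hS : HasShadowing f) : HasLShadowing f := by
  obtain ⟨η, hη, hexp⟩ : ∃ η > 0, IsExpansivityConstant f η := hexp
  intro ε hε
  have hε' : min ε η / 2 < min ε η := half_lt_self (lt_min hε hη)
  obtain ⟨δ, hδ, hsh⟩ := hS.hasTwoSidedShadowing hf (min ε η / 2) (by positivity)
  refine ⟨δ, hδ, fun x hx hax => ?_⟩
  obtain ⟨z, hz, hzx⟩ := hsh x hx
  have hzx' : ∀ i, dist (z i) (x i) ≤ min ε η / 2 := fun i => (hzx i).le
  have hlt : min ε η / 2 < η := hε'.trans_le (min_le_right ε η)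
  exact ⟨z, hz, fun i => (hzx i).trans (hε'.trans_le (min_le_left ε η)),
    hexp.tendsto_dist_of_fullOrbit hf hlt (fun j => tendsto_atTop_add_const_right _ j tendsto_id)
      hz hzx' hax.1,
    hexp.tendsto_dist_of_fullOrbit hf hlt (fun j => tendsto_atBot_add_const_right _ j tendsto_id)
      hz hzx' hax.2⟩

end Compact

section BackwardExtension

variable (hsurj : Function.Surjective f)

noncomputable def preimageChain (x₀ : X) : ℕ → X
  | 0 => x₀
  | n + 1 => Function.surjInv hsurj (preimageChain x₀ n)

noncomputable def extendBackward (x : ℕ → X) (i : ℤ) : X :=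
  if 0 ≤ i then x i.toNat else preimageChain hsurj (x 0) (-i).toNat

variable {x : ℕ → X}

omit [MetricSpace X] in
@[simp]
theorem extendBackward_natCast (n : ℕ) : extendBackward hsurj x n = x n := by
  simp [extendBackward]

omit [MetricSpace X] in
theorem extendBackward_of_nonpos {i : ℤ} (hi : i ≤ 0) :
    extendBackward hsurj x i = preimageChain hsurj (x 0) (-i).toNat := by
  unfold extendBackward
  split_ifs with h
  · obtain rfl : i = 0 := le_antisymm hi h
    rfl
  · rfl

theorem dist_map_extendBackward_of_neg {i : ℤ} (hi : i < 0) :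
    dist (f (extendBackward hsurj x i)) (extendBackward hsurj x (i + 1)) = 0 := by
  have hchain : (-i).toNat = (-(i + 1)).toNat + 1 := by omega
  rw [extendBackward_of_nonpos hsurj hi.le, extendBackward_of_nonpos hsurj (by omega), hchain,
    preimageChain, Function.surjInv_eq hsurj, dist_self]

theorem dist_map_extendBackward_natCast (n : ℕ) :
    dist (f (extendBackward hsurj x n)) (extendBackward hsurj x (n + 1)) =
      dist (f (x n)) (x (n + 1)) := by
  rw [← Nat.cast_succ, extendBackward_natCast, extendBackward_natCast]

theorem PseudoOrbit.extendBackward {δ : ℝ} (hx : PseudoOrbit f δ x) (hδ : 0 < δ) :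
    TwoSidedPseudoOrbit f δ (extendBackward hsurj x) := by
  intro i
  rcases lt_or_ge i 0 with hi | hi
  · rwa [dist_map_extendBackward_of_neg hsurj hi]
  · lift i to ℕ using hi
    rw [dist_map_extendBackward_natCast]
    exact hx i

theorem AsymptoticPseudoOrbit.extendBackward (hx : AsymptoticPseudoOrbit f x) :
    TwoSidedAsymptotic f (extendBackward hsurj x) := by
  constructor
  · have htoNat : Tendsto Int.toNat atTop atTop :=
      tendsto_atTop_atTop.2 fun b => ⟨b, fun i hi => by omega⟩
    refine (hx.comp htoNat).congr' ((eventually_ge_atTop 0).mono fun i hi => ?_)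
    lift i to ℕ using hi
    simp only [Function.comp_apply, Int.toNat_natCast]
    exact (dist_map_extendBackward_natCast hsurj i).symm
  · exact tendsto_const_nhds.congr' ((eventually_lt_atBot 0).mono fun i hi =>
      (dist_map_extendBackward_of_neg hsurj hi).symm)

end BackwardExtension

theorem HasTwoSidedShadowing.hasShadowing (hsurj : Function.Surjective f)
    (hT : HasTwoSidedShadowing f) : HasShadowing f := by
  intro ε hε
  obtain ⟨δ, hδ, hsh⟩ := hT ε hε
  refine ⟨δ, hδ, fun x hx => ?_⟩
  obtain ⟨z, hz, hzx⟩ := hsh _ (hx.extendBackward hsurj hδ)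
  exact ⟨z 0, fun i => by simpa [hz.iterate_apply] using hzx i⟩

theorem HasLShadowing.hasSLimitShadowing (hsurj : Function.Surjective f) (hL : HasLShadowing f)
    (hS : HasShadowing f) : HasSLimitShadowing f := by
  refine ⟨hS, fun ε hε => ?_⟩
  obtain ⟨δ, hδ, hsh⟩ := hL ε hε
  refine ⟨δ, hδ, fun x hx hax => ?_⟩
  obtain ⟨z, hz, hzx, hlim, -⟩ := hsh _ (hx.extendBackward hsurj hδ) (hax.extendBackward hsurj)
  refine ⟨z 0, fun i => by simpa [hz.iterate_apply] using hzx i, ?_⟩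
  simpa [hz.iterate_apply, Function.comp_def] using hlim.comp tendsto_natCast_atTop_atTop

theorem expansive_surjection_shadowing_equivalences
    {X : Type*} [MetricSpace X] [CompactSpace X] (f : X → X) (hf : Continuous f)
    (hsurj : Function.Surjective f) (hexp : CExpansive f) :
    (HasShadowing f ↔ HasTwoSidedShadowing f) ∧
    (HasShadowing f ↔ HasSLimitShadowing f) ∧
    (HasShadowing f ↔ HasTwoSidedSLimitShadowing f) := by
  have hT (h : HasShadowing f) : HasTwoSidedShadowing f := h.hasTwoSidedShadowing hf
  have hL (h : HasShadowing f) : HasLShadowing f := h.hasLShadowing hf hexp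
  exact ⟨⟨hT, (·.hasShadowing hsurj)⟩,
    ⟨fun h => (hL h).hasSLimitShadowing hsurj h, And.left⟩,
    ⟨fun h => ⟨hT h, hL h⟩, fun h => h.1.hasShadowing hsurj⟩⟩
end

section
/- If a compact metric dynamical system (X,f) has n-shadowing, then it has two-sided n-shadowing. -/
open Filter Topology Function

variable {X : Type*} [MetricSpace X]

/-!
Existence: `ε/2`-shadow each forward tail `i ↦ x (i - m)` and re-index the shadowing orbit to
start at time `-m`; a cluster point of these sequences in the compact space `ℤ → X` is a full
orbit within `ε/2` of `x`. Bound: a full orbit `ε`-shadowing `x` makes `z 0` an `ε`-shadowing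
point of the forward half of `x`, of which there are at most `n`.
-/

theorem exists_forall_mem_of_eventually_mem {Y α ι : Type*} [TopologicalSpace Y]
    [CompactSpace Y] {l : Filter α} [l.NeBot] (u : α → Y) {C : ι → Set Y}
    (hC : ∀ i, IsClosed (C i)) (hu : ∀ i, ∀ᶠ a in l, u a ∈ C i) : ∃ y, ∀ i, y ∈ C i := by
  obtain ⟨y, hy⟩ := exists_clusterPt_of_compactSpace (map u l)
  exact ⟨y, fun i => (hC i).mem_of_mapClusterPt hy (hu i)⟩

theorem FullOrbit.iterate_apply_s12 {α : Type*} {f : α → α} {z : ℤ → α} (hz : FullOrbit f z)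
    (i : ℤ) (k : ℕ) : f^[k] (z i) = z (i + k) := by
  induction k with
  | zero => simp
  | succ k ih => rw [iterate_succ_apply', ih, hz, Nat.cast_succ, add_assoc]

section

variable {f : X → X}

theorem FullOrbit.shadowsFrom {ε : ℝ} {z x : ℤ → X} (hz : FullOrbit f z)
    (hzx : ∀ i, dist (z i) (x i) < ε) : ShadowsFrom f ε (z 0) (fun i : ℕ => x i) := by
  intro i
  simpa [hz.iterate_apply_s12] using hzx i

theorem TwoSidedPseudoOrbit.mono {δ δ' : ℝ} {x : ℤ → X} (hx : TwoSidedPseudoOrbit f δ x)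
    (hδ : δ ≤ δ') : TwoSidedPseudoOrbit f δ' x :=
  fun i => (hx i).trans_le hδ

theorem TwoSidedPseudoOrbit.pseudoOrbit_shift {δ : ℝ} {x : ℤ → X}
    (hx : TwoSidedPseudoOrbit f δ x) (m : ℤ) : PseudoOrbit f δ (fun i : ℕ => x (i - m)) := by
  intro i
  simpa [sub_add_eq_add_sub] using hx (i - m)

theorem exists_fullOrbit_dist_le_of_forall_shadowsFrom [CompactSpace X] (hf : Continuous f)
    {ε : ℝ} {x : ℤ → X} (h : ∀ m : ℕ, ∃ w, ShadowsFrom f ε w (fun i : ℕ => x (i - m))) :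
    ∃ z : ℤ → X, FullOrbit f z ∧ ∀ i, dist (z i) (x i) ≤ ε := by
  choose w hw using h
  let C : ℤ → Set (ℤ → X) := fun i => {v | f (v i) = v (i + 1) ∧ dist (v i) (x i) ≤ ε}
  have hC : ∀ i, IsClosed (C i) := fun i =>
    (isClosed_eq (hf.comp (continuous_apply i)) (continuous_apply (i + 1))).inter
      (isClosed_le ((continuous_apply i).dist continuous_const) continuous_const)
  have hu : ∀ i, ∀ᶠ m : ℕ in atTop, (fun j : ℤ => f^[(j + m).toNat] (w m)) ∈ C i := by
    intro i
    filter_upwards [eventually_ge_atTop (-i).toNat] with m hm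
    have hsucc : (i + 1 + m).toNat = (i + m).toNat + 1 := by omega
    have hdist : dist _ (x (((i + m).toNat : ℕ) - m)) < ε := hw m (i + m).toNat
    rw [show (((i + m).toNat : ℕ) : ℤ) - m = i by omega] at hdist
    exact ⟨by simp only [hsucc, iterate_succ_apply'], hdist.le⟩
  obtain ⟨z, hz⟩ := exists_forall_mem_of_eventually_mem _ hC hu
  exact ⟨z, fun i => (hz i).1, fun i => (hz i).2⟩

end

theorem nShadowing_implies_twoSidedNShadowing_general
    {X : Type*} [MetricSpace X] [CompactSpace X] (f : X → X) (hf : Continuous f)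
    (n : ℕ) (h : HasNShadowing f n) : HasTwoSidedNShadowing f n := by
  obtain ⟨η, hη, H⟩ := h
  refine ⟨η, hη, fun ε hε hεη => ?_⟩
  obtain ⟨δ₁, hδ₁, H₁⟩ := H (ε / 2) (half_pos hε) (by linarith)
  obtain ⟨δ₂, hδ₂, H₂⟩ := H ε hε hεη
  refine ⟨min δ₁ δ₂, lt_min hδ₁ hδ₂, fun x hx => ⟨?_, ?_⟩⟩
  · obtain ⟨z, hz, hzx⟩ := exists_fullOrbit_dist_le_of_forall_shadowsFrom hf fun m =>
      (H₁ _ ((hx.mono (min_le_left _ _)).pseudoOrbit_shift m)).1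
    exact ⟨z, hz, fun i => (hzx i).trans_lt (half_lt_self hε)⟩
  · have hx₀ : PseudoOrbit f δ₂ (fun i : ℕ => x i) := by
      simpa using (hx.mono (min_le_right _ _)).pseudoOrbit_shift 0
    obtain ⟨F, hF, hsub⟩ := (H₂ _ hx₀).2
    refine ⟨F, hF, ?_⟩
    rintro _ ⟨z, hz, rfl, hzx⟩
    exact hsub (hz.shadowsFrom hzx)

theorem nShadowing_implies_twoSidedNShadowing
    {X : Type*} [MetricSpace X] [CompactSpace X] (f : X → X) (hf : Continuous f)
    (n : ℕ) (hn : 1 ≤ n) (h : HasNShadowing f n) : HasTwoSidedNShadowing f n :=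
  nShadowing_implies_twoSidedNShadowing_general f hf n h
end
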